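/- arXiv:2403.03055 — 5 statements merged into one kernel-verified Lean document; each statement's English description precedes it below -/
import Mathlib

section
/- Let A be a normed ring, n a positive integer, d : Fin n → Fin n → ℕ a graph distance satisfying the triangle inequality, and γ ∈ (0,1). If X, Y : Matrix (Fin n) (Fin n) A are (x,γ)-SED and (y,γ)-SED respectively with respect to d (with x, y > 0), then the product X * Y is (n·x·y, γ)-SED with respect to d, i.e. ‖(X * Y) i j‖ ≤ n·x·y·γ^(d i j) for all i, j. -/
/-!
Each entry of `X * Y` is a sum of `card ι` products `X i k * Y k j`, and by the triangle
inequality `d i j ≤ d i k + d k j` each product has norm at most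
`x * y * γ ^ (d i k + d k j) ≤ x * y * γ ^ d i j`, since `γ ≤ 1`.
-/

lemma pow_mul_pow_le_pow_of_le_add {R : Type*} [Semiring R] [PartialOrder R]
    [IsOrderedRing R] {γ : R} (hγ0 : 0 ≤ γ) (hγ1 : γ ≤ 1) {a b c : ℕ} (h : c ≤ a + b) :
    γ ^ a * γ ^ b ≤ γ ^ c :=
  pow_add γ a b ▸ pow_le_pow_of_le_one hγ0 hγ1 h

namespace Matrix

variable {ι A : Type*} [Fintype ι] [NonUnitalSeminormedRing A]

lemma norm_mul_apply_le_sum (X Y : Matrix ι ι A) (i j : ι) :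
    ‖(X * Y) i j‖ ≤ ∑ k, ‖X i k‖ * ‖Y k j‖ :=
  (norm_sum_le _ _).trans (Finset.sum_le_sum fun _ _ => norm_mul_le _ _)

def IsSpatiallyExpDecaying (d : ι → ι → ℕ) (c γ : ℝ) (X : Matrix ι ι A) : Prop :=
  ∀ i j, ‖X i j‖ ≤ c * γ ^ d i j

theorem IsSpatiallyExpDecaying.mul {d : ι → ι → ℕ} (hd_tri : ∀ i j k, d i k ≤ d i j + d j k)
    {γ x y : ℝ} (hγ0 : 0 ≤ γ) (hγ1 : γ ≤ 1) (hx : 0 ≤ x) (hy : 0 ≤ y) {X Y : Matrix ι ι A}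
    (hX : X.IsSpatiallyExpDecaying d x γ) (hY : Y.IsSpatiallyExpDecaying d y γ) :
    (X * Y).IsSpatiallyExpDecaying d (Fintype.card ι * x * y) γ := by
  intro i j
  have hterm (k : ι) : ‖X i k‖ * ‖Y k j‖ ≤ x * y * γ ^ d i j :=
    calc ‖X i k‖ * ‖Y k j‖ ≤ (x * γ ^ d i k) * (y * γ ^ d k j) :=
          mul_le_mul (hX i k) (hY k j) (norm_nonneg _) (by positivity)
      _ = x * y * (γ ^ d i k * γ ^ d k j) := by ring
      _ ≤ x * y * γ ^ d i j := by
          gcongr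
          exact pow_mul_pow_le_pow_of_le_add hγ0 hγ1 (hd_tri i k j)
  calc ‖(X * Y) i j‖ ≤ ∑ k, ‖X i k‖ * ‖Y k j‖ := norm_mul_apply_le_sum X Y i j
    _ ≤ ∑ _k : ι, x * y * γ ^ d i j := Finset.sum_le_sum fun k _ => hterm k
    _ = Fintype.card ι * x * y * γ ^ d i j := by
        rw [Finset.sum_const, Finset.card_univ, nsmul_eq_mul]; ring

end Matrix

theorem sed_mul_sed_general {A : Type*} [NormedRing A] {n : ℕ}
    (d : Fin n → Fin n → ℕ)
    (hd_tri : ∀ i j k, d i k ≤ d i j + d j k)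
    {γ : ℝ} (hγ0 : 0 < γ) (hγ1 : γ < 1)
    {x y : ℝ} (hx : 0 < x) (hy : 0 < y)
    (X Y : Matrix (Fin n) (Fin n) A)
    (hX : ∀ i j, ‖X i j‖ ≤ x * γ ^ (d i j))
    (hY : ∀ i j, ‖Y i j‖ ≤ y * γ ^ (d i j)) :
    ∀ i j, ‖(X * Y) i j‖ ≤ (n : ℝ) * x * y * γ ^ (d i j) := by
  simpa only [Matrix.IsSpatiallyExpDecaying, Fintype.card_fin] using
    Matrix.IsSpatiallyExpDecaying.mul hd_tri hγ0.le hγ1.le hx.le hy.le hX hY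

/-- If `X` is `(x,γ)`-SED and `Y` is `(y,γ)`-SED with respect to a graph
distance `d` satisfying the triangle inequality, then `X * Y` is `(n·x·y,γ)`-SED. -/
theorem sed_mul_sed {A : Type*} [NormedRing A] {n : ℕ} (hn : 0 < n)
    (d : Fin n → Fin n → ℕ)
    (hd_refl : ∀ i, d i i = 0)
    (hd_symm : ∀ i j, d i j = d j i)
    (hd_tri : ∀ i j k, d i k ≤ d i j + d j k)
    {γ : ℝ} (hγ0 : 0 < γ) (hγ1 : γ < 1)
    {x y : ℝ} (hx : 0 < x) (hy : 0 < y)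
    (X Y : Matrix (Fin n) (Fin n) A)
    (hX : ∀ i j, ‖X i j‖ ≤ x * γ ^ (d i j))
    (hY : ∀ i j, ‖Y i j‖ ≤ y * γ ^ (d i j)) :
    ∀ i j, ‖(X * Y) i j‖ ≤ (n : ℝ) * x * y * γ ^ (d i j) :=
  sed_mul_sed_general d hd_tri hγ0 hγ1 hx hy X Y hX hY
end

section
/- Let A be a normed ring, n a positive integer, d : Fin n → Fin n → ℕ a graph distance satisfying the triangle inequality, γ ∈ (0,1), and κ : ℕ. Suppose X : Matrix (Fin n) (Fin n) A is (x,γ)-SED with respect to d (x > 0), and Y : Matrix (Fin n) (Fin n) A is κ-banded with respect to d with ‖Y i j‖ ≤ ȳ for all i, j. Then for all i, j, ‖(X * Y) i j‖ ≤ n·x·ȳ·γ^(d i j) / γ^κ; that is, X * Y is (n·x·ȳ·γ^(−κ), γ)-SED with respect to d. -/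
/-!
If `Y k j ≠ 0` then `d k j ≤ κ`, so the triangle inequality gives `d i j ≤ d i k + κ` and, as
`γ ≤ 1`, `γ ^ d i k ≤ γ ^ d i j / γ ^ κ`. Hence each of the `n` terms `X i k * Y k j` of
`(X * Y) i j` has norm at most `x * ȳ * γ ^ d i j / γ ^ κ`.
-/

lemma pow_le_pow_div_pow_of_le_add {γ : ℝ} (hγ0 : 0 < γ) (hγ1 : γ ≤ 1) {a b κ : ℕ}
    (h : a ≤ b + κ) : γ ^ b ≤ γ ^ a / γ ^ κ := by
  rw [le_div_iff₀ (pow_pos hγ0 κ), ← pow_add]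
  exact pow_le_pow_of_le_one hγ0.le hγ1 h

lemma norm_mul_le_of_decay_of_band {A : Type*} [NonUnitalSeminormedRing A] {γ x ybar : ℝ}
    (hγ0 : 0 < γ) (hγ1 : γ ≤ 1) (hx : 0 ≤ x) {a b : A} {dik dkj dij κ : ℕ}
    (htri : dij ≤ dik + dkj) (ha : ‖a‖ ≤ x * γ ^ dik) (hb : ‖b‖ ≤ ybar)
    (hband : κ < dkj → b = 0) : ‖a * b‖ ≤ x * ybar * γ ^ dij / γ ^ κ := by
  have hybar : 0 ≤ ybar := (norm_nonneg b).trans hb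
  by_cases hκ : κ < dkj
  · rw [hband hκ, mul_zero, norm_zero]
    positivity
  · have hpow : γ ^ dik ≤ γ ^ dij / γ ^ κ := pow_le_pow_div_pow_of_le_add hγ0 hγ1 (by omega)
    calc ‖a * b‖ ≤ x * γ ^ dik * ybar :=
          (norm_mul_le a b).trans (mul_le_mul ha hb (norm_nonneg b) (by positivity))
      _ ≤ x * (γ ^ dij / γ ^ κ) * ybar := by gcongr
      _ = x * ybar * γ ^ dij / γ ^ κ := by ring

lemma Matrix.norm_mul_apply_le_card_mul {l m n R : Type*} [Fintype m]
    [NonUnitalSeminormedRing R] {X : Matrix l m R} {Y : Matrix m n R} {i : l} {j : n} {C : ℝ}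
    (h : ∀ k, ‖X i k * Y k j‖ ≤ C) : ‖(X * Y) i j‖ ≤ Fintype.card m * C := by
  rw [Matrix.mul_apply]
  calc ‖∑ k, X i k * Y k j‖ ≤ ∑ _k : m, C := norm_sum_le_of_le _ fun k _ => h k
    _ = Fintype.card m * C := by rw [Finset.sum_const, Finset.card_univ, nsmul_eq_mul]

theorem sed_mul_banded_general {A : Type*} [NormedRing A] {n : ℕ}
    (d : Fin n → Fin n → ℕ)
    (hd_tri : ∀ i j k, d i k ≤ d i j + d j k)
    {γ : ℝ} (hγ0 : 0 < γ) (hγ1 : γ < 1) (κ : ℕ)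
    {x ybar : ℝ} (hx : 0 < x)
    (X Y : Matrix (Fin n) (Fin n) A)
    (hX : ∀ i j, ‖X i j‖ ≤ x * γ ^ (d i j))
    (hY_band : ∀ i j, κ < d i j → Y i j = 0)
    (hY_bound : ∀ i j, ‖Y i j‖ ≤ ybar) :
    ∀ i j, ‖(X * Y) i j‖ ≤ (n : ℝ) * x * ybar * γ ^ (d i j) / γ ^ κ := by
  intro i j
  have h := Matrix.norm_mul_apply_le_card_mul fun k =>
    norm_mul_le_of_decay_of_band hγ0 hγ1.le hx.le (hd_tri i k j) (hX i k) (hY_bound k j)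
      (hY_band k j)
  rw [Fintype.card_fin] at h
  calc ‖(X * Y) i j‖ ≤ n * (x * ybar * γ ^ d i j / γ ^ κ) := h
    _ = n * x * ybar * γ ^ d i j / γ ^ κ := by ring

/-- If `X` is `(x,γ)`-SED and `Y` is `κ`-banded with entry norms bounded by
`ȳ`, then `X * Y` is `(n·x·ȳ·γ^(−κ), γ)`-SED with respect to `d`. -/
theorem sed_mul_banded {A : Type*} [NormedRing A] {n : ℕ} (hn : 0 < n)
    (d : Fin n → Fin n → ℕ)
    (hd_refl : ∀ i, d i i = 0)
    (hd_symm : ∀ i j, d i j = d j i)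
    (hd_tri : ∀ i j k, d i k ≤ d i j + d j k)
    {γ : ℝ} (hγ0 : 0 < γ) (hγ1 : γ < 1) (κ : ℕ)
    {x ybar : ℝ} (hx : 0 < x)
    (X Y : Matrix (Fin n) (Fin n) A)
    (hX : ∀ i j, ‖X i j‖ ≤ x * γ ^ (d i j))
    (hY_band : ∀ i j, κ < d i j → Y i j = 0)
    (hY_bound : ∀ i j, ‖Y i j‖ ≤ ybar) :
    ∀ i j, ‖(X * Y) i j‖ ≤ (n : ℝ) * x * ybar * γ ^ (d i j) / γ ^ κ :=
  sed_mul_banded_general d hd_tri hγ0 hγ1 κ hx X Y hX hY_band hY_bound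
end

section
/- Let e = exp 1. For all natural numbers t and κ with κ ≤ t and t + κ even, the binomial coefficient satisfies (choose t ((t+κ)/2) : ℝ) ≤ e · ((3e/2)^(3/2))^t · (e^(−1/2))^κ. (This bounds the number of length-t walks between two vertices at distance κ in the path graph ℤ by e · ((3e/2)^(3/2))^t · e^(−κ/2).) -/
/-!
Since `choose t k ≤ 2 ^ t`, it suffices that `2 ≤ c * d` for `c = (3e/2)^(3/2)` and
`d = e^(-1/2) ≤ 1`: then `2 ^ t ≤ c ^ t * d ^ t ≤ c ^ t * d ^ κ` because `κ ≤ t`. And indeed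
`c * d ≥ e^(3/2) * e^(-1/2) = e > 2`.
-/

open Real

theorem pow_le_pow_mul_pow_of_le_mul {a c d : ℝ} {κ t : ℕ} (ha : 0 ≤ a) (hc : 0 ≤ c)
    (hd₀ : 0 ≤ d) (hd₁ : d ≤ 1) (hacd : a ≤ c * d) (hκt : κ ≤ t) :
    a ^ t ≤ c ^ t * d ^ κ :=
  calc a ^ t ≤ (c * d) ^ t := pow_le_pow_left₀ ha hacd t
    _ = c ^ t * d ^ t := mul_pow c d t
    _ ≤ c ^ t * d ^ κ :=
      mul_le_mul_of_nonneg_left (pow_le_pow_of_le_one hd₀ hd₁ hκt) (pow_nonneg hc t)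

theorem exp_one_rpow_neg_half_le_one : exp 1 ^ (-(1 : ℝ) / 2) ≤ 1 := by
  rw [exp_one_rpow, exp_le_one_iff]
  norm_num

theorem exp_one_le_rpow_mul_exp_one_rpow_neg_half :
    exp 1 ≤ (3 * exp 1 / 2) ^ ((3 : ℝ) / 2) * exp 1 ^ (-(1 : ℝ) / 2) :=
  calc exp 1 = exp 1 ^ ((3 : ℝ) / 2) * exp 1 ^ (-(1 : ℝ) / 2) := by
        rw [exp_one_rpow, exp_one_rpow, ← exp_add]; norm_num
    _ ≤ (3 * exp 1 / 2) ^ ((3 : ℝ) / 2) * exp 1 ^ (-(1 : ℝ) / 2) := by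
        gcongr
        linarith [exp_pos 1]

theorem choose_le_line_walk_bound_general (t κ : ℕ) (hκt : κ ≤ t) :
    (Nat.choose t ((t + κ) / 2) : ℝ) ≤
      Real.exp 1 * ((3 * Real.exp 1 / 2) ^ ((3 : ℝ) / 2)) ^ t *
        (Real.exp 1 ^ (-(1 : ℝ) / 2)) ^ κ := by
  calc (Nat.choose t ((t + κ) / 2) : ℝ) ≤ 2 ^ t := by
        exact_mod_cast Nat.choose_le_two_pow t _
    _ ≤ ((3 * exp 1 / 2) ^ ((3 : ℝ) / 2)) ^ t * (exp 1 ^ (-(1 : ℝ) / 2)) ^ κ :=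
      pow_le_pow_mul_pow_of_le_mul zero_le_two (by positivity) (by positivity)
        exp_one_rpow_neg_half_le_one
        (exp_one_gt_two.le.trans exp_one_le_rpow_mul_exp_one_rpow_neg_half) hκt
    _ ≤ exp 1 * ((3 * exp 1 / 2) ^ ((3 : ℝ) / 2)) ^ t * (exp 1 ^ (-(1 : ℝ) / 2)) ^ κ := by
      rw [mul_assoc]
      exact le_mul_of_one_le_left (by positivity) (one_le_two.trans exp_one_gt_two.le)

/-- For `κ ≤ t` with `t + κ` even, the binomial coefficient (i.e. the
number of length-`t` walks between vertices at distance `κ` in the path graph ℤ)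
satisfies `choose t ((t+κ)/2) ≤ e · ((3e/2)^(3/2))^t · (e^(−1/2))^κ`. -/
theorem choose_le_line_walk_bound (t κ : ℕ) (hκt : κ ≤ t) (heven : Even (t + κ)) :
    (Nat.choose t ((t + κ) / 2) : ℝ) ≤
      Real.exp 1 * ((3 * Real.exp 1 / 2) ^ ((3 : ℝ) / 2)) ^ t *
        (Real.exp 1 ^ (-(1 : ℝ) / 2)) ^ κ :=
  choose_le_line_walk_bound_general t κ hκt
end

section
/- Let e = exp 1. For all t : ℕ and all u, v : ℤ × ℤ, the number of functions s : Fin t → ℤ × ℤ such that every value s i lies in {(1,0), (−1,0), (0,1), (0,−1)} and Σ_i s i = v − u is at most (e/2) · ((5e²)/2)^t · e^(−κ), where κ = |v.1 − u.1| + |v.2 − u.2| is the ℓ¹ (grid-graph) distance between u and v. (This bounds the number of length-t walks from u to v in the 4-regular grid graph on ℤ².) -/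
/-!
There are at most `4 ^ t` step sequences, and each step moves by exactly one in `ℓ¹`,
so a walk from `u` to `v` exists only when `κ ≤ t`. In that case `4 ^ t ≤ (4e)^t e^{-κ}`,
and `4e ≤ 5e²/2`, `1 ≤ e/2` because `e ≥ 2`.
-/

open Real

lemma Nat.card_subtype_forall_mem_and_le {ι α : Type*} [Finite ι] (S : Set α) [Finite S]
    (P : (ι → α) → Prop) :
    Nat.card {s : ι → α // (∀ i, s i ∈ S) ∧ P s} ≤ Nat.card S ^ Nat.card ι := by
  rw [← Nat.card_fun]
  refine Nat.card_le_card_of_injective (fun s i => ⟨s.1 i, s.2.1 i⟩) fun s s' h => ?_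
  exact Subtype.ext <| funext fun i => congrArg Subtype.val (congrFun h i)

lemma natAbs_sum_fst_add_natAbs_sum_snd_le {ι : Type*} (s : Finset ι) (f : ι → ℤ × ℤ) :
    (∑ i ∈ s, f i).1.natAbs + (∑ i ∈ s, f i).2.natAbs ≤
      ∑ i ∈ s, ((f i).1.natAbs + (f i).2.natAbs) := by
  rw [Prod.fst_sum, Prod.snd_sum, Finset.sum_add_distrib]
  exact add_le_add (Int.natAbs_sum_le _ _) (Int.natAbs_sum_le _ _)

lemma natAbs_add_natAbs_eq_one_of_mem_unitSteps {p : ℤ × ℤ}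
    (hp : p ∈ ({(1, 0), (-1, 0), (0, 1), (0, -1)} : Set (ℤ × ℤ))) :
    p.1.natAbs + p.2.natAbs = 1 := by
  rcases hp with rfl | rfl | rfl | rfl <;> rfl

lemma natAbs_add_natAbs_le_card_of_unitSteps {ι : Type*} [Fintype ι] {s : ι → ℤ × ℤ}
    (hs : ∀ i, s i ∈ ({(1, 0), (-1, 0), (0, 1), (0, -1)} : Set (ℤ × ℤ))) :
    (∑ i, s i).1.natAbs + (∑ i, s i).2.natAbs ≤ Fintype.card ι := by
  calc (∑ i, s i).1.natAbs + (∑ i, s i).2.natAbs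
      ≤ ∑ i, ((s i).1.natAbs + (s i).2.natAbs) := natAbs_sum_fst_add_natAbs_sum_snd_le _ _
    _ = Fintype.card ι := by
      simp only [natAbs_add_natAbs_eq_one_of_mem_unitSteps (hs _), Finset.sum_const,
        smul_eq_mul, mul_one, Finset.card_univ]

lemma four_pow_le_exp_bound {t κ : ℕ} (hκ : κ ≤ t) :
    (4 : ℝ) ^ t ≤ exp 1 / 2 * (5 * exp 1 ^ 2 / 2) ^ t * exp 1 ^ (-(κ : ℝ)) := by
  have he : (2 : ℝ) ≤ exp 1 := by linarith [add_one_le_exp (1 : ℝ)]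
  rw [rpow_neg (exp_pos 1).le, rpow_natCast, ← div_eq_mul_inv, le_div_iff₀ (by positivity)]
  calc (4 : ℝ) ^ t * exp 1 ^ κ
      ≤ 4 ^ t * exp 1 ^ t := by gcongr; linarith
    _ = (4 * exp 1) ^ t := (mul_pow _ _ _).symm
    _ ≤ (5 * exp 1 ^ 2 / 2) ^ t := by gcongr; nlinarith
    _ ≤ exp 1 / 2 * (5 * exp 1 ^ 2 / 2) ^ t := le_mul_of_one_le_left (by positivity) (by linarith)

/-- The number of length-`t` walks from `u` to `v` in the 4-regular grid
graph on ℤ² (sequences of `t` unit steps summing to `v − u`) is at most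
`(e/2) · ((5e²)/2)^t · e^(−κ)`, where `κ = |v.1 − u.1| + |v.2 − u.2|` is the grid-graph
distance between `u` and `v`. -/
theorem grid_walk_count_bound (t : ℕ) (u v : ℤ × ℤ) :
    (Nat.card {s : Fin t → ℤ × ℤ //
        (∀ i, s i ∈ ({(1, 0), (-1, 0), (0, 1), (0, -1)} : Set (ℤ × ℤ))) ∧
        (∑ i, s i) = v - u} : ℝ) ≤
      (Real.exp 1 / 2) * (5 * Real.exp 1 ^ 2 / 2) ^ t *
        Real.exp 1 ^ (-(((v.1 - u.1).natAbs + (v.2 - u.2).natAbs : ℕ) : ℝ)) := by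
  set W := {s : Fin t → ℤ × ℤ //
    (∀ i, s i ∈ ({(1, 0), (-1, 0), (0, 1), (0, -1)} : Set (ℤ × ℤ))) ∧
    (∑ i, s i) = v - u}
  rcases isEmpty_or_nonempty W with hempty | ⟨⟨w, hw_steps, hw_sum⟩⟩
  · rw [Nat.card_of_isEmpty, Nat.cast_zero]
    positivity
  · have hκ : (v.1 - u.1).natAbs + (v.2 - u.2).natAbs ≤ t := by
      simpa [hw_sum] using natAbs_add_natAbs_le_card_of_unitSteps hw_steps
    have hcard : Nat.card W ≤ 4 ^ t := by
      refine (Nat.card_subtype_forall_mem_and_le _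
        (fun s : Fin t → ℤ × ℤ => ∑ i, s i = v - u)).trans ?_
      simp
    calc (Nat.card W : ℝ) ≤ 4 ^ t := by exact_mod_cast hcard
      _ ≤ _ := four_pow_le_exp_bound hκ
end

section
/- Let e = exp 1 and let f be a positive integer. Consider the infinite f-ary tree T: the simple graph with vertex set List (Fin f), in which x and y are adjacent iff y = a :: x or x = a :: y for some a : Fin f. For all vertices x, y, all t : ℕ, and all κ : ℕ with κ ≤ dist_T(x,y) (the graph distance in T), the number of walks of length t from x to y in T is at most (2e²·f^(1/2))^t · (e^(−1)·f^(−1/2))^κ. -/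
open Real

/-!
Write `ρ x` for the tree distance from `x` to `y`, computed along the root path of `x`
(`List.treeDist`): going from `x` to a child `a :: x` changes `ρ` by one, and it decreases only
for the (at most one) child on the root path of `y`. Hence for `0 < r ≤ 1` the function
`φ = r ^ ρ` satisfies `∑_{z ∼ x} φ z ≤ (2 / r + f r) φ x`, and since `φ y = 1`, induction on `t`
bounds the number of walks of length `t` from `x` to `y` by `(2 / r + f r) ^ t φ x`. For
`r = (e √f)⁻¹` the growth factor is `(2e + e⁻¹) √f ≤ 2e² √f`, and `ρ ≥ dist` gives the claim.
-/

def infTree (f : ℕ) : SimpleGraph (List (Fin f)) where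
  Adj x y := (∃ a : Fin f, y = a :: x) ∨ (∃ a : Fin f, x = a :: y)
  symm := ⟨fun x y h => h.symm⟩
  loopless := ⟨fun x h => by
    rcases h with ⟨a, ha⟩ | ⟨a, ha⟩ <;> exact List.cons_ne_self a x ha.symm⟩

namespace SimpleGraph

variable {V : Type*} (G : SimpleGraph V) [G.LocallyFinite]

theorem natCard_walk_length_eq_card_finsetWalkLength [DecidableEq V] (n : ℕ) (u v : V) :
    Nat.card {p : G.Walk u v // p.length = n} = (G.finsetWalkLength n u v).card := by
  rw [Nat.card_eq_fintype_card]
  exact G.card_set_walk_length_eq u v n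

theorem natCard_walk_length_succ_le [DecidableEq V] (n : ℕ) (u v : V) :
    Nat.card {p : G.Walk u v // p.length = n + 1} ≤
      ∑ w ∈ G.neighborFinset u, Nat.card {p : G.Walk w v // p.length = n} := by
  simp only [natCard_walk_length_eq_card_finsetWalkLength, neighborFinset, ← Finset.sum_set_coe]
  refine Finset.card_biUnion_le.trans ?_
  simp only [Finset.card_map, le_refl]

theorem natCard_walk_length_le_pow_mul {φ : V → ℝ} {C : ℝ} (hφ : 0 ≤ φ) (hC : 0 ≤ C) {v : V}
    (hv : 1 ≤ φ v) (hsum : ∀ u, ∑ w ∈ G.neighborFinset u, φ w ≤ C * φ u) (n : ℕ) (u : V) :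
    (Nat.card {p : G.Walk u v // p.length = n} : ℝ) ≤ C ^ n * φ u := by
  classical
  induction n generalizing u with
  | zero =>
    rw [natCard_walk_length_eq_card_finsetWalkLength]
    by_cases huv : u = v
    · subst huv
      simpa [finsetWalkLength] using hv
    · simpa [finsetWalkLength, huv] using hφ u
  | succ n ih =>
    calc (Nat.card {p : G.Walk u v // p.length = n + 1} : ℝ)
        ≤ ∑ w ∈ G.neighborFinset u, (Nat.card {p : G.Walk w v // p.length = n} : ℝ) := by
          exact_mod_cast G.natCard_walk_length_succ_le n u v
      _ ≤ ∑ w ∈ G.neighborFinset u, C ^ n * φ w := Finset.sum_le_sum fun w _ => ih w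
      _ ≤ C ^ n * (C * φ u) := by rw [← Finset.mul_sum]; gcongr; exact hsum u
      _ = C ^ (n + 1) * φ u := by ring

end SimpleGraph

namespace List

variable {α : Type*}

theorem eq_of_cons_suffix {a b : α} {x y : List α} (ha : a :: x <:+ y) (hb : b :: x <:+ y) :
    a = b :=
  (cons_eq_cons.mp <| (suffix_of_suffix_length_le ha hb (by simp)).eq_of_length (by simp)).1

variable [DecidableEq α]

def treeDist : List α → List α → ℕ
  | [], y => y.length
  | a :: x, y => if a :: x <:+ y then treeDist x y - 1 else treeDist x y + 1

theorem treeDist_of_suffix {s y : List α} (h : s <:+ y) : treeDist s y = y.length - s.length := by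
  induction s with
  | nil => simp [treeDist]
  | cons a s ih =>
    rw [treeDist, if_pos h, ih ((suffix_cons a s).trans h), length_cons]
    omega

theorem treeDist_self (y : List α) : treeDist y y = 0 := by
  simp [treeDist_of_suffix (suffix_refl y)]

theorem treeDist_le_tail_add_one (x y : List α) : treeDist x y ≤ treeDist x.tail y + 1 := by
  cases x with
  | nil => simp
  | cons a x => rw [treeDist]; split <;> simp only [tail_cons] <;> omega

theorem sum_pow_treeDist_cons_le [Fintype α] {r : ℝ} (hr : 0 ≤ r) (x y : List α) :
    ∑ a : α, r ^ treeDist (a :: x) y ≤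
      r ^ (treeDist x y - 1) + Fintype.card α * r ^ (treeDist x y + 1) := by
  rw [← Finset.sum_filter_add_sum_filter_not _ (fun a => a :: x <:+ y)]
  gcongr
  · have hcard : (Finset.univ.filter fun a => a :: x <:+ y).card ≤ 1 :=
      Finset.card_le_one.mpr fun a ha b hb => by
        simp only [Finset.mem_filter] at ha hb
        exact eq_of_cons_suffix ha.2 hb.2
    refine (Finset.sum_le_card_nsmul _ _ (r ^ (treeDist x y - 1)) fun a ha => ?_).trans ?_
    · rw [treeDist, if_pos (Finset.mem_filter.mp ha).2]
    · rw [nsmul_eq_mul]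
      exact mul_le_of_le_one_left (by positivity) (by exact_mod_cast hcard)
  · refine (Finset.sum_le_card_nsmul _ _ (r ^ (treeDist x y + 1)) fun a ha => ?_).trans ?_
    · rw [treeDist, if_neg (Finset.mem_filter.mp ha).2]
    · rw [nsmul_eq_mul]
      gcongr
      exact_mod_cast Finset.card_le_univ _

end List

open SimpleGraph

namespace infTree

variable {f : ℕ}

theorem adj_cons (a : Fin f) (x : List (Fin f)) : (infTree f).Adj (a :: x) x :=
  Or.inr ⟨a, rfl⟩

theorem exists_walk_of_suffix {s x : List (Fin f)} (h : s <:+ x) :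
    ∃ w : (infTree f).Walk x s, w.length = x.length - s.length := by
  induction x with
  | nil => obtain rfl := List.suffix_nil.mp h; exact ⟨.nil, rfl⟩
  | cons a x ih =>
    rcases List.suffix_cons_iff.mp h with rfl | h
    · exact ⟨.nil, by simp⟩
    · obtain ⟨w, hw⟩ := ih h
      have := h.length_le
      exact ⟨.cons (adj_cons a x) w, by rw [Walk.length_cons, hw, List.length_cons]; omega⟩

theorem exists_walk_length_treeDist (x y : List (Fin f)) :
    ∃ w : (infTree f).Walk x y, w.length = x.treeDist y := by
  induction x with
  | nil =>
    obtain ⟨w, hw⟩ := exists_walk_of_suffix List.nil_suffix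
    exact ⟨w.reverse, by simp [hw, List.treeDist]⟩
  | cons a x ih =>
    by_cases h : a :: x <:+ y
    · obtain ⟨w, hw⟩ := exists_walk_of_suffix h
      exact ⟨w.reverse, by rw [Walk.length_reverse, hw, List.treeDist_of_suffix h]⟩
    · obtain ⟨w, hw⟩ := ih
      exact ⟨.cons (adj_cons a x) w, by rw [Walk.length_cons, hw, List.treeDist, if_neg h]⟩

theorem dist_le_treeDist (x y : List (Fin f)) : (infTree f).dist x y ≤ x.treeDist y := by
  obtain ⟨w, hw⟩ := exists_walk_length_treeDist x y
  exact hw ▸ SimpleGraph.dist_le w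

def parentOrChild (x : List (Fin f)) : Option (Fin f) → List (Fin f) :=
  fun o => o.elim x.tail (· :: x)

theorem neighborSet_subset_range (x : List (Fin f)) :
    (infTree f).neighborSet x ⊆ Set.range (parentOrChild x) := by
  rintro z (⟨a, rfl⟩ | ⟨a, rfl⟩)
  · exact ⟨some a, rfl⟩
  · exact ⟨none, rfl⟩

noncomputable instance : (infTree f).LocallyFinite := fun x =>
  ((Set.finite_range _).subset (neighborSet_subset_range x)).fintype

theorem sum_neighborFinset_le {φ : List (Fin f) → ℝ} (hφ : 0 ≤ φ) (x : List (Fin f)) :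
    ∑ z ∈ (infTree f).neighborFinset x, φ z ≤ φ x.tail + ∑ a, φ (a :: x) := by
  classical
  calc ∑ z ∈ (infTree f).neighborFinset x, φ z
      ≤ ∑ z ∈ Finset.univ.image (parentOrChild x), φ z := by
        refine Finset.sum_le_sum_of_subset_of_nonneg (fun z hz => ?_) fun z _ _ => hφ z
        obtain ⟨o, rfl⟩ := neighborSet_subset_range x ((infTree f).mem_neighborFinset x z |>.mp hz)
        exact Finset.mem_image_of_mem _ (Finset.mem_univ o)
    _ ≤ ∑ o, φ (parentOrChild x o) := Finset.sum_image_le_of_nonneg fun z _ => hφ z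
    _ = φ x.tail + ∑ a, φ (a :: x) := Fintype.sum_option _

theorem sum_neighborFinset_pow_treeDist_le {r : ℝ} (hr0 : 0 < r) (hr1 : r ≤ 1)
    (x y : List (Fin f)) :
    ∑ z ∈ (infTree f).neighborFinset x, r ^ z.treeDist y ≤ (2 / r + f * r) * r ^ x.treeDist y := by
  set d := x.treeDist y
  have htail : r ^ x.tail.treeDist y ≤ r ^ (d - 1) :=
    pow_le_pow_of_le_one hr0.le hr1 (by have := List.treeDist_le_tail_add_one x y; omega)
  have hpred : r ^ (d - 1) ≤ r ^ d / r := by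
    rw [le_div_iff₀ hr0]
    rcases d with _ | d
    · simpa using hr1
    · rw [Nat.add_sub_cancel, pow_succ]
  have hchildren := List.sum_pow_treeDist_cons_le hr0.le x y
  rw [Fintype.card_fin] at hchildren
  calc ∑ z ∈ (infTree f).neighborFinset x, r ^ z.treeDist y
      ≤ r ^ x.tail.treeDist y + ∑ a, r ^ (a :: x).treeDist y :=
        sum_neighborFinset_le (fun _ => by positivity) x
    _ ≤ 2 * (r ^ d / r) + f * r ^ (d + 1) := by linarith
    _ = (2 / r + f * r) * r ^ d := by field_simp; ring

theorem natCard_walk_length_le {r : ℝ} (hr0 : 0 < r) (hr1 : r ≤ 1) (x y : List (Fin f)) (t : ℕ) :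
    (Nat.card {w : (infTree f).Walk x y // w.length = t} : ℝ) ≤
      (2 / r + f * r) ^ t * r ^ (infTree f).dist x y := by
  calc (Nat.card {w : (infTree f).Walk x y // w.length = t} : ℝ)
      ≤ (2 / r + f * r) ^ t * r ^ x.treeDist y :=
        (infTree f).natCard_walk_length_le_pow_mul (fun _ => by positivity) (by positivity)
          (by simp [List.treeDist_self]) (sum_neighborFinset_pow_treeDist_le hr0 hr1 · y) t x
    _ ≤ (2 / r + f * r) ^ t * r ^ (infTree f).dist x y := by
        gcongr _ * ?_
        exact pow_le_pow_of_le_one hr0.le hr1 (dist_le_treeDist x y)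

end infTree

/-- In the infinite `f`-ary tree, for any vertices `x, y`, any `t : ℕ`,
and any `κ ≤ dist(x,y)`, the number of walks of length `t` from `x` to `y` is at most
`(2e²·f^(1/2))^t · (e^(−1)·f^(−1/2))^κ`. -/
theorem tree_walk_count_bound (f : ℕ) (hf : 0 < f) (x y : List (Fin f)) (t κ : ℕ)
    (hκ : κ ≤ (infTree f).dist x y) :
    (Nat.card {w : (infTree f).Walk x y // w.length = t} : ℝ) ≤
      (2 * Real.exp 1 ^ 2 * (f : ℝ) ^ ((1 : ℝ) / 2)) ^ t *
        ((Real.exp 1)⁻¹ * (f : ℝ) ^ (-(1 : ℝ) / 2)) ^ κ := by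
  set s := (f : ℝ) ^ ((1 : ℝ) / 2)
  set r := (Real.exp 1 * s)⁻¹ with hr_def
  have hf1 : (1 : ℝ) ≤ f := by exact_mod_cast hf
  have hs1 : 1 ≤ s := Real.one_le_rpow hf1 (by norm_num)
  have hsf : s * s = f := by rw [← Real.rpow_add (by positivity)]; norm_num
  have he : 2 ≤ Real.exp 1 := (by norm_num : (2 : ℝ) ≤ 2.7182818283).trans Real.exp_one_gt_d9.le
  have hr : (Real.exp 1)⁻¹ * (f : ℝ) ^ (-(1 : ℝ) / 2) = r := by
    rw [neg_div, Real.rpow_neg (by positivity), hr_def, mul_inv]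
  have hr0 : 0 < r := by positivity
  have hr1 : r ≤ 1 := inv_le_one_of_one_le₀ (by nlinarith)
  have hC : 2 / r + f * r ≤ 2 * Real.exp 1 ^ 2 * s := by
    rw [hr_def, ← hsf]
    field_simp
    nlinarith
  rw [hr]
  calc (Nat.card {w : (infTree f).Walk x y // w.length = t} : ℝ)
      ≤ (2 / r + f * r) ^ t * r ^ (infTree f).dist x y := infTree.natCard_walk_length_le hr0 hr1 x y t
    _ ≤ (2 * Real.exp 1 ^ 2 * s) ^ t * r ^ κ :=
        mul_le_mul (pow_le_pow_left₀ (by positivity) hC t) (pow_le_pow_of_le_one hr0.le hr1 hκ)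
          (by positivity) (by positivity)
end
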